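/- arXiv:1901.00387 — 4 statements merged into one kernel-verified Lean document; each statement's English description precedes it below -/
import Mathlib

section
/- Fix m, L, w, t with 0 ≤ w ≤ L. Let P(m,L;w,t) = {(u₁,...,u_m) : L ≥ u₁ ≥ u₂ ≥ ... ≥ u_m ≥ 0 and Σᵢ |uᵢ − w| ≤ t}. Then |P(m,L;w,t)| ≤ N(t), where N(t) = Σ_{r=0}^{t} Σ_{i=0}^{r} p(i)·p(r−i) and p denotes the partition function. -/
/-!
Split each deviation `uᵢ - w` into its positive and negative parts. The nonzero excesses
`(uᵢ - w)⁺` form a partition of some `a`, the nonzero deficits `(w - uᵢ)⁺` a partition of some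
`b`, and `a + b = Σᵢ |uᵢ - w| ≤ t`. Because `u` is non-increasing, the excesses are
non-increasing and the deficits non-decreasing, so each sequence is recovered from its nonzero
values and the length `m`; hence `u` is determined by the pair of partitions, and there are
`Σ_{r ≤ t} Σ_{a + b = r} p(a) p(b) = N(t)` such pairs.
-/

open Finset

/-- The partition function `p(i)`: the number of partitions of `i`. -/
def partCount (i : ℕ) : ℕ := Fintype.card (Nat.Partition i)

/-- `N(t) = Σ_{r=0}^{t} Σ_{i=0}^{r} p(i) p(r-i)`. -/
def Nval (t : ℕ) : ℕ :=
  ∑ r ∈ Finset.range (t + 1), ∑ i ∈ Finset.range (r + 1), partCount i * partCount (r - i)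

/-- `P(m,L;w,t)`: non-increasing `m`-tuples with entries in `[0,L]` whose
ℓ₁-deviation from the constant tuple `(w,…,w)` is at most `t`. -/
def Pset (m L w t : ℕ) : Finset (Fin m → Fin (L + 1)) :=
  Finset.univ.filter (fun u =>
    (∀ i j : Fin m, i ≤ j → (u j : ℕ) ≤ (u i : ℕ)) ∧
    ∑ i, ((u i : ℤ) - (w : ℤ)).natAbs ≤ t)

theorem Multiset.eq_of_card_eq_of_filter_ne_zero_eq {s s' : Multiset ℕ}
    (hcard : card s = card s') (h : s.filter (· ≠ 0) = s'.filter (· ≠ 0)) : s = s' := by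
  have hzero (r : Multiset ℕ) : r.filter (¬· ≠ 0) = replicate (count 0 r) 0 := by
    simpa only [not_not] using filter_eq' r 0
  have hcount : count 0 s = count 0 s' := by
    have hs := congrArg card (filter_add_not (· ≠ 0) s)
    have hs' := congrArg card (filter_add_not (· ≠ 0) s')
    rw [card_add, hzero, card_replicate] at hs hs'
    rw [h] at hs
    omega
  rw [← filter_add_not (· ≠ 0) s, ← filter_add_not (· ≠ 0) s', h, hzero, hzero, hcount]

def partitionOfFn {m : ℕ} (f : Fin m → ℕ) : Nat.Partition (∑ i, f i) :=
  Nat.Partition.ofSums _ (List.ofFn f) (by simp [List.sum_ofFn])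

section partitionOfFn

variable {m : ℕ} {f g : Fin m → ℕ}

theorem coe_ofFn_eq_of_partitionOfFn_parts_eq
    (h : (partitionOfFn f).parts = (partitionOfFn g).parts) :
    (List.ofFn f : Multiset ℕ) = List.ofFn g :=
  Multiset.eq_of_card_eq_of_filter_ne_zero_eq (by simp) h

theorem Antitone.eq_of_partitionOfFn_parts_eq (hf : Antitone f) (hg : Antitone g)
    (h : (partitionOfFn f).parts = (partitionOfFn g).parts) : f = g :=
  List.ofFn_injective <| List.Perm.eq_of_sortedGE hf.sortedGE_ofFn hg.sortedGE_ofFn <|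
    Multiset.coe_eq_coe.mp (coe_ofFn_eq_of_partitionOfFn_parts_eq h)

theorem Monotone.eq_of_partitionOfFn_parts_eq (hf : Monotone f) (hg : Monotone g)
    (h : (partitionOfFn f).parts = (partitionOfFn g).parts) : f = g :=
  List.ofFn_injective <| List.Perm.eq_of_sortedLE hf.sortedLE_ofFn hg.sortedLE_ofFn <|
    Multiset.coe_eq_coe.mp (coe_ofFn_eq_of_partitionOfFn_parts_eq h)

end partitionOfFn

/-- Elements `⟨r, (a, b), (λ, μ)⟩` with `λ ⊢ a`, `μ ⊢ b`; the redundant total `r = a + b` mirrors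
the outer sum of `Nval`. -/
abbrev PartitionPair : Type := Σ _ : ℕ, Σ ab : ℕ × ℕ, Nat.Partition ab.1 × Nat.Partition ab.2

def partitionPairs (t : ℕ) : Finset PartitionPair :=
  (range (t + 1)).sigma fun r => (antidiagonal r).sigma fun _ => univ

theorem card_partitionPairs (t : ℕ) : (partitionPairs t).card = Nval t := by
  simp only [partitionPairs, card_sigma, card_univ, Fintype.card_prod, Nval, partCount,
    Nat.sum_antidiagonal_eq_sum_range_succ_mk]

def deviationPartitions (w : ℕ) {m : ℕ} (f : Fin m → ℕ) : PartitionPair :=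
  ⟨∑ i, (f i - w) + ∑ i, (w - f i), (∑ i, (f i - w), ∑ i, (w - f i)),
    (partitionOfFn fun i => f i - w, partitionOfFn fun i => w - f i)⟩

section deviationPartitions

variable {w m : ℕ} {f g : Fin m → ℕ}

theorem deviationPartitions_mem_partitionPairs {t : ℕ}
    (hf : ∑ i, ((f i : ℤ) - w).natAbs ≤ t) : deviationPartitions w f ∈ partitionPairs t := by
  have hsplit : ∑ i, ((f i : ℤ) - w).natAbs = ∑ i, (f i - w) + ∑ i, (w - f i) := by
    rw [← sum_add_distrib]
    exact sum_congr rfl fun i _ => by omega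
  simp only [deviationPartitions, partitionPairs, mem_sigma, mem_range, HasAntidiagonal.mem_antidiagonal,
    mem_univ, and_true]
  omega

theorem Antitone.eq_of_deviationPartitions_eq (hf : Antitone f) (hg : Antitone g)
    (h : deviationPartitions w f = deviationPartitions w g) : f = g := by
  have hparts := congrArg (fun x : PartitionPair => (x.2.2.1.parts, x.2.2.2.parts)) h
  simp only [deviationPartitions, Prod.mk.injEq] at hparts
  have hexcess : (fun i => f i - w) = fun i => g i - w :=
    Antitone.eq_of_partitionOfFn_parts_eq (fun _ _ hij => Nat.sub_le_sub_right (hf hij) w)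
      (fun _ _ hij => Nat.sub_le_sub_right (hg hij) w) hparts.1
  have hdeficit : (fun i => w - f i) = fun i => w - g i :=
    Monotone.eq_of_partitionOfFn_parts_eq (fun _ _ hij => Nat.sub_le_sub_left (hf hij) w)
      (fun _ _ hij => Nat.sub_le_sub_left (hg hij) w) hparts.2
  funext i
  have := congrFun hexcess i
  have := congrFun hdeficit i
  omega

end deviationPartitions

theorem stmt_2_general (m L w t : ℕ) :
    (Pset m L w t).card ≤ Nval t := by
  rw [← card_partitionPairs]
  refine card_le_card_of_injOn (fun u => deviationPartitions w fun i => (u i : ℕ)) ?_ ?_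
  · intro u hu
    exact deviationPartitions_mem_partitionPairs (mem_filter.mp hu).2.2
  · intro u hu v hv huv
    have hanti := Antitone.eq_of_deviationPartitions_eq (mem_filter.mp hu).2.1
      (mem_filter.mp hv).2.1 huv
    exact funext fun i => Fin.ext (congrFun hanti i)

/-- Proposition 1 (upper bound): `|P(m,L;w,t)| ≤ N(t)`. -/
theorem stmt_2 (m L w t : ℕ) (hw : w ≤ L) :
    (Pset m L w t).card ≤ Nval t :=
  stmt_2_general m L w t
end

section
/- Fix m, L, w, t with m ≥ t and t ≤ min{w, L−w}. Then |P(m,L;w,t)| = N(t), where N(t) = Σ_{r=0}^{t} Σ_{i=0}^{r} p(i)·p(r−i). -/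
/-!
A non-increasing tuple `u` splits into its excess `(u j - w)⁺`, which is non-increasing, and its
deficit `(w - u j)⁺` read backwards, which is non-increasing too; the deviation `Σ |u j - w|` is
the sum of their totals. Conversely, non-increasing `a, b` with `Σ a + Σ b ≤ t ≤ m` never
overlap (`a j > 0` forces `Σ a > j`, and `b (m - 1 - j) > 0` forces `Σ b ≥ m - j`), so
`u j = w + a j - b (m - 1 - j)` recovers `u`, and `t ≤ min w (L - w)` keeps it in `[0, L]`.
Finally, a non-increasing `m`-tuple of naturals with sum `n ≤ m` is a partition of `n` padded
with zeros, so the tuples of deviation `r` and total excess `i` number `p(i) p(r - i)`.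
-/

open Finset

theorem sort_map_univ_of_antitone {m : ℕ} {a : Fin m → ℕ} (ha : Antitone a) :
    (univ.val.map a).sort (· ≥ ·) = List.ofFn a := by
  rw [Fin.univ_val_map, Multiset.coe_sort]
  exact List.mergeSort_of_pairwise
    (List.pairwise_ofFn.mpr fun _ _ hij => by simpa using ha hij.le)

def antitoneEquivMultiset (m : ℕ) :
    {a : Fin m → ℕ // Antitone a} ≃ {s : Multiset ℕ // Multiset.card s = m} where
  toFun a := ⟨univ.val.map a.1, by simp⟩
  invFun s := ⟨fun j => (s.1.sort (· ≥ ·))[(j : ℕ)]'(by simp [s.2]),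
    fun j k hjk => ((s.1.sort (· ≥ ·)).sortedGE_iff_pairwise.mpr
      (Multiset.pairwise_sort _ _)).getElem_ge_getElem_of_le hjk⟩
  left_inv a := by
    ext j
    simp only [sort_map_univ_of_antitone a.2, List.getElem_ofFn]
  right_inv s := by
    ext1
    have : List.ofFn (fun j : Fin m => (s.1.sort (· ≥ ·))[(j : ℕ)]'(by simp [s.2]))
        = s.1.sort (· ≥ ·) := List.ext_getElem (by simp [s.2]) (by simp)
    simp only [Fin.univ_val_map, this, Multiset.sort_eq]

theorem Nat.Partition.card_parts_le {n : ℕ} (p : n.Partition) : Multiset.card p.parts ≤ n := by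
  simpa [p.parts_sum] using Multiset.card_nsmul_le_sum (fun x hx => p.parts_pos hx)

def multisetEquivPartition (m n : ℕ) :
    {s : Multiset ℕ // Multiset.card s = m ∧ s.sum = n} ≃
      {p : n.Partition // Multiset.card p.parts ≤ m} where
  toFun s := ⟨.ofSums n s.1 s.2.2, by
    simpa [s.2.1] using Multiset.card_le_card (Multiset.filter_le (· ≠ 0) s.1)⟩
  invFun p := ⟨p.1.parts + Multiset.replicate (m - Multiset.card p.1.parts) 0,
    by simp only [Multiset.card_add, Multiset.card_replicate]; omega, by simp [p.1.parts_sum]⟩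
  left_inv s := by
    obtain ⟨s, rfl, -⟩ := s
    ext1
    show s.filter (· ≠ 0) +
      Multiset.replicate (Multiset.card s - Multiset.card (s.filter (· ≠ 0))) 0 = s
    have hcard := congrArg Multiset.card (Multiset.filter_add_not (· ≠ 0) s)
    rw [Multiset.card_add] at hcard
    conv_rhs => rw [← Multiset.filter_add_not (· ≠ 0) s]
    congr 1
    exact (Multiset.eq_replicate.mpr
      ⟨by omega, fun b hb => by simpa using Multiset.of_mem_filter hb⟩).symm
  right_inv p := by
    ext1
    ext1
    simp only [Nat.Partition.ofSums_parts, Multiset.filter_add]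
    rw [Multiset.filter_eq_self.mpr fun x hx => (p.1.parts_pos hx).ne',
      Multiset.filter_eq_nil.mpr fun a ha => by simp [Multiset.eq_of_mem_replicate ha], add_zero]

abbrev AntitoneTuple (m n : ℕ) := {a : Fin m → ℕ // Antitone a ∧ ∑ j, a j = n}

def antitoneTupleEquivPartition (m n : ℕ) :
    AntitoneTuple m n ≃ {p : n.Partition // Multiset.card p.parts ≤ m} :=
  (Equiv.subtypeSubtypeEquivSubtypeInter Antitone fun a => ∑ j, a j = n).symm.trans <|
    (Equiv.subtypeEquiv (antitoneEquivMultiset m) fun _ => Iff.rfl).trans <|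
      (Equiv.subtypeSubtypeEquivSubtypeInter (Multiset.card · = m) (·.sum = n)).trans
        (multisetEquivPartition m n)

def antitoneTupleEquivPartitionOfLE {m n : ℕ} (h : n ≤ m) : AntitoneTuple m n ≃ n.Partition :=
  (antitoneTupleEquivPartition m n).trans
    (Equiv.subtypeUnivEquiv fun p => p.card_parts_le.trans h)

theorem Antitone.add_one_le_sum_of_pos {m : ℕ} {a : Fin m → ℕ} (ha : Antitone a) {j : Fin m}
    (hj : 0 < a j) : (j : ℕ) + 1 ≤ ∑ k, a k :=
  calc (j : ℕ) + 1 = ∑ _k ∈ Iic j, 1 := by simp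
    _ ≤ ∑ k ∈ Iic j, a k := sum_le_sum fun k hk => hj.trans_le (ha (mem_Iic.mp hk))
    _ ≤ ∑ k, a k := sum_le_sum_of_subset (subset_univ _)

theorem Antitone.eq_zero_or_eq_zero_rev {m : ℕ} {a b : Fin m → ℕ} (ha : Antitone a)
    (hb : Antitone b) (hab : ∑ j, a j + ∑ j, b j ≤ m) (j : Fin m) : a j = 0 ∨ b j.rev = 0 := by
  by_contra! h
  have hj := ha.add_one_le_sum_of_pos (Nat.pos_of_ne_zero h.1)
  have hjrev := hb.add_one_le_sum_of_pos (Nat.pos_of_ne_zero h.2)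
  rw [Fin.val_rev] at hjrev
  omega

section Deviation

variable {m : ℕ} (w : ℕ)

def excess (u : Fin m → ℕ) (j : Fin m) : ℕ := u j - w

def deficit (u : Fin m → ℕ) (j : Fin m) : ℕ := w - u j.rev

def recombine (a b : Fin m → ℕ) (j : Fin m) : ℕ := w + a j - b j.rev

variable {w}

theorem Antitone.excess {u : Fin m → ℕ} (hu : Antitone u) : Antitone (excess w u) :=
  fun _ _ hjk => Nat.sub_le_sub_right (hu hjk) w

theorem Antitone.deficit {u : Fin m → ℕ} (hu : Antitone u) : Antitone (deficit w u) :=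
  fun _ _ hjk => Nat.sub_le_sub_left (hu (Fin.rev_le_rev.mpr hjk)) w

theorem Antitone.recombine {a b : Fin m → ℕ} (ha : Antitone a) (hb : Antitone b) :
    Antitone (recombine w a b) := fun j k hjk => by
  have := ha hjk
  have := hb (Fin.rev_le_rev.mpr hjk)
  show w + a k - b k.rev ≤ w + a j - b j.rev
  omega

theorem natAbs_sub_eq_excess_add_deficit (u : Fin m → ℕ) (j : Fin m) :
    ((u j : ℤ) - w).natAbs = excess w u j + deficit w u j.rev := by
  simp only [excess, deficit, Fin.rev_rev]
  omega

theorem sum_natAbs_sub_eq (u : Fin m → ℕ) :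
    ∑ j, ((u j : ℤ) - w).natAbs = ∑ j, excess w u j + ∑ j, deficit w u j := by
  simp only [natAbs_sub_eq_excess_add_deficit, sum_add_distrib,
    Fintype.sum_equiv Fin.revPerm (fun j => deficit w u j.rev) (deficit w u) (by simp)]

theorem recombine_excess_deficit (u : Fin m → ℕ) :
    recombine w (excess w u) (deficit w u) = u := by
  funext j
  simp only [recombine, excess, deficit, Fin.rev_rev]
  omega

theorem excess_recombine {a b : Fin m → ℕ} (ha : Antitone a) (hb : Antitone b)
    (hab : ∑ j, a j + ∑ j, b j ≤ m) : excess w (recombine w a b) = a := by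
  funext j
  have := Finset.single_le_sum (fun k _ => Nat.zero_le (b k)) (mem_univ j.rev)
  have := ha.eq_zero_or_eq_zero_rev hb hab j
  simp only [excess, recombine]
  omega

theorem deficit_recombine {a b : Fin m → ℕ} (ha : Antitone a) (hb : Antitone b)
    (hab : ∑ j, a j + ∑ j, b j ≤ m) (hbw : ∑ j, b j ≤ w) : deficit w (recombine w a b) = b := by
  funext j
  have := Finset.single_le_sum (fun k _ => Nat.zero_le (b k)) (mem_univ j)
  have := ha.eq_zero_or_eq_zero_rev hb hab j.rev
  simp only [deficit, recombine, Fin.rev_rev] at this ⊢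
  omega

end Deviation

abbrev AntitonePairs (m t : ℕ) :=
  {ab : (Fin m → ℕ) × (Fin m → ℕ) //
    Antitone ab.1 ∧ Antitone ab.2 ∧ ∑ j, ab.1 j + ∑ j, ab.2 j ≤ t}

def antitonePairsEquivSigma (m t : ℕ) :
    AntitonePairs m t ≃
      Σ r : Fin (t + 1), Σ i : Fin (r + 1), AntitoneTuple m i × AntitoneTuple m (r - i) where
  toFun ab := ⟨⟨∑ j, ab.1.1 j + ∑ j, ab.1.2 j, by omega⟩, ⟨∑ j, ab.1.1 j, by simp⟩,
    ⟨ab.1.1, ab.2.1, rfl⟩, ⟨ab.1.2, ab.2.2.1, by simp⟩⟩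
  invFun x := ⟨(x.2.2.1.1, x.2.2.2.1), x.2.2.1.2.1, x.2.2.2.2.1, by
    obtain ⟨⟨r, hr⟩, ⟨i, hi⟩, ⟨a, -, ha⟩, ⟨b, -, hb⟩⟩ := x
    dsimp only at ha hb hi ⊢
    omega⟩
  left_inv _ := rfl
  right_inv := by
    rintro ⟨⟨r, hr⟩, ⟨i, hi⟩, ⟨a, ha, hai⟩, ⟨b, hb, hsum⟩⟩
    simp only at hi hai hsum
    subst hai
    obtain rfl : r = ∑ j, a j + ∑ j, b j := by omega
    rfl

theorem mem_Pset {m L w t : ℕ} {u : Fin m → Fin (L + 1)} :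
    u ∈ Pset m L w t ↔ Antitone (fun j => (u j : ℕ)) ∧ ∑ j, ((u j : ℤ) - w).natAbs ≤ t := by
  simp only [Pset, mem_filter, mem_univ, true_and]
  rfl

def psetEquivAntitonePairs {m L w t : ℕ} (hw : w ≤ L) (hm : t ≤ m) (htw : t ≤ w)
    (htLw : t ≤ L - w) : Pset m L w t ≃ AntitonePairs m t where
  toFun u :=
    have hu := mem_Pset.mp u.2
    ⟨(excess w fun j => u.1 j, deficit w fun j => u.1 j), hu.1.excess, hu.1.deficit,
      by simpa only [sum_natAbs_sub_eq] using hu.2⟩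
  invFun ab := ⟨fun j => ⟨recombine w ab.1.1 ab.1.2 j, by
      have := Finset.single_le_sum (fun k _ => Nat.zero_le (ab.1.1 k)) (mem_univ j)
      have := ab.2.2.2
      simp only [recombine]
      omega⟩, by
    obtain ⟨⟨a, b⟩, ha, hb, hab⟩ := ab
    refine mem_Pset.mpr ⟨ha.recombine hb, ?_⟩
    rw [sum_natAbs_sub_eq, excess_recombine ha hb (by omega),
      deficit_recombine ha hb (by omega) (by omega)]
    exact hab⟩
  left_inv u := Subtype.ext (funext fun j =>
    Fin.ext (congrFun (recombine_excess_deficit (w := w) fun j => (u.1 j : ℕ)) j))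
  right_inv := by
    rintro ⟨⟨a, b⟩, ha, hb, hab⟩
    exact Subtype.ext (Prod.ext (excess_recombine ha hb (hab.trans hm))
      (deficit_recombine ha hb (hab.trans hm) ((le_add_self.trans hab).trans htw)))

/-- Proposition 1 (equality case): if `m ≥ t` and `t ≤ min{w, L-w}`,
then `|P(m,L;w,t)| = N(t)`. -/
theorem stmt_3 (m L w t : ℕ) (hw : w ≤ L) (hm : t ≤ m)
    (htw : t ≤ w) (htLw : t ≤ L - w) :
    (Pset m L w t).card = Nval t := by
  have e : Pset m L w t ≃
      Σ r : Fin (t + 1), Σ i : Fin (r + 1), (i : ℕ).Partition × (r - i : ℕ).Partition :=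
    (psetEquivAntitonePairs hw hm htw htLw).trans <| (antitonePairsEquivSigma m t).trans <|
      Equiv.sigmaCongrRight fun r => Equiv.sigmaCongrRight fun i =>
        have := r.2
        have := i.2
        (antitoneTupleEquivPartitionOfLE (by omega)).prodCongr
          (antitoneTupleEquivPartitionOfLE (by omega))
  simp only [← Fintype.card_coe, Fintype.card_congr e, Fintype.card_sigma, Fintype.card_prod, Nval,
    partCount, Finset.sum_range]
end

section
/- Let C(m,L,w) ⊆ {0,1}^{mL} be the set of words whose every length-L subblock has Hamming weight exactly w, with 1 ≤ w ≤ L−1. Any code C ⊆ C(m,L,w) with minimum Hamming distance at least 4 satisfies |C| ≤ C(L,w−1)·C(L,w)^{m−1}/w if w ≤ L/2, and |C| ≤ C(L,w+1)·C(L,w)^{m−1}/(L−w) if w > L/2. -/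
open Finset

/-- The Hamming weight of a length-`L` binary subblock. -/
def wt {L : ℕ} (b : Fin L → Bool) : ℕ :=
  (Finset.univ.filter (fun j => b j = true)).card

/-- Hamming distance between two binary words of length `mL`, given as `m`
subblocks of length `L`. -/
def hdist {m L : ℕ} (x y : Fin m → Fin L → Bool) : ℕ :=
  ∑ i, hammingDist (x i) (y i)

/-! Every codeword `c` has `d` bits equal to `b` in its first subblock; flipping one of them
gives a word at distance one from `c` whose first subblock has weight `w'` and whose other
subblocks have weight `w`. Since codewords are at distance at least `3`, no word arises from two
different flips, so `|C| d ≤ C(L, w') C(L, w)^(m-1)`. Flipping ones (`d = w`, `w' = w - 1`) and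
flipping zeros (`d = L - w`, `w' = w + 1`) give the two bounds. -/

theorem Nat.succ_le_choose_of_lt {n k : ℕ} (h : k < n) : k + 1 ≤ n.choose k := by
  induction n, h using Nat.le_induction with
  | base => exact (Nat.choose_succ_self_right k).ge
  | succ n _ ih => exact ih.trans (Nat.choose_le_succ n k)

section Subblock

variable {L : ℕ}

def flipBit (a : Fin L → Bool) (j : Fin L) : Fin L → Bool :=
  Function.update a j (!a j)

theorem hammingDist_flipBit (a : Fin L → Bool) (j : Fin L) :
    hammingDist a (flipBit a j) = 1 := by
  rw [hammingDist, card_eq_one]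
  refine ⟨j, ext fun k => ?_⟩
  rw [mem_filter]
  rcases eq_or_ne k j with rfl | hk <;> simp [flipBit, *]

theorem flipBit_injective (a : Fin L → Bool) : Function.Injective (flipBit a) := by
  intro j j' h
  by_contra hne
  have := congrFun h j
  simp [flipBit, Function.update_of_ne hne] at this

theorem wt_flipBit_of_true {a : Fin L → Bool} {j : Fin L} (h : a j = true) :
    wt (flipBit a j) = wt a - 1 := by
  have : univ.filter (fun k => flipBit a j k = true) =
      (univ.filter (fun k => a k = true)).erase j := by
    ext k
    rcases eq_or_ne k j with rfl | hk <;> simp [flipBit, Function.update_of_ne, *]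
  rw [wt, this, card_erase_of_mem (by simpa using h), wt]

theorem wt_flipBit_of_false {a : Fin L → Bool} {j : Fin L} (h : a j = false) :
    wt (flipBit a j) = wt a + 1 := by
  have : univ.filter (fun k => flipBit a j k = true) =
      insert j (univ.filter (fun k => a k = true)) := by
    ext k
    rcases eq_or_ne k j with rfl | hk <;> simp [flipBit, Function.update_of_ne, *]
  rw [wt, this, card_insert_of_notMem (by simp [h]), wt]

theorem card_filter_eq_false (a : Fin L → Bool) : #{j | a j = false} = L - wt a := by
  have : univ.filter (fun j => a j = false) = (univ.filter (fun j => a j = true))ᶜ := by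
    ext j; simp
  rw [this, card_compl, Fintype.card_fin, wt]

theorem card_filter_wt_eq (k : ℕ) : #{b : Fin L → Bool | wt b = k} = L.choose k := by
  conv_rhs => rw [← card_fin L, ← card_powersetCard]
  refine card_nbij' (fun b => univ.filter (fun j => b j = true)) (fun s j => decide (j ∈ s))
    ?_ ?_ ?_ ?_ <;> intro _ <;> simp only [mem_coe, mem_filter, mem_univ, true_and] <;> simp [wt]

end Subblock

section Word

variable {m L : ℕ}

theorem hdist_comm (x y : Fin m → Fin L → Bool) : hdist x y = hdist y x := by
  simp only [hdist, hammingDist_comm]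

theorem hdist_triangle (x y z : Fin m → Fin L → Bool) :
    hdist x z ≤ hdist x y + hdist y z := by
  rw [hdist, hdist, hdist, ← sum_add_distrib]
  exact sum_le_sum fun i _ => hammingDist_triangle _ _ _

theorem hdist_update_self (x : Fin m → Fin L → Bool) (i : Fin m) (a : Fin L → Bool) :
    hdist x (Function.update x i a) = hammingDist (x i) a := by
  rw [hdist, sum_eq_single i (fun k _ hk => by simp [Function.update_of_ne hk]) (by simp)]
  simp

theorem card_mul_le_card_of_flipBit (C T : Finset (Fin m → Fin L → Bool)) (i : Fin m) (b : Bool)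
    (d : ℕ) (hmin : ∀ x ∈ C, ∀ y ∈ C, x ≠ y → 3 ≤ hdist x y)
    (hd : ∀ c ∈ C, #{j | c i j = b} = d)
    (hT : ∀ c ∈ C, ∀ j, c i j = b → Function.update c i (flipBit (c i) j) ∈ T) :
    #C * d ≤ #T := by
  have hcard : #(C.sigma fun c => {j | c i j = b}) = #C * d := by
    rw [card_sigma, sum_congr rfl hd, sum_const, smul_eq_mul]
  rw [← hcard]
  refine card_le_card_of_injOn (fun p => Function.update p.1 i (flipBit (p.1 i) p.2))
    (fun p hp => ?_) ?_
  · simp only [coe_sigma, Set.mem_sigma_iff, mem_coe, mem_filter, mem_univ, true_and] at hp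
    exact hT p.1 hp.1 p.2 hp.2
  rintro ⟨c, j⟩ hc ⟨c', j'⟩ hc' heq
  simp only [coe_sigma, Set.mem_sigma_iff, mem_coe] at hc hc' heq
  have hcc' : c = c' := by
    by_contra hne
    have hcz : hdist c (Function.update c i (flipBit (c i) j)) = 1 := by
      rw [hdist_update_self, hammingDist_flipBit]
    have hzc' : hdist (Function.update c i (flipBit (c i) j)) c' = 1 := by
      rw [heq, hdist_comm, hdist_update_self, hammingDist_flipBit]
    have := hdist_triangle c (Function.update c i (flipBit (c i) j)) c'
    linarith [hmin c hc.1 c' hc'.1 hne]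
  subst hcc'
  have := congrFun heq i
  simp only [Function.update_self] at this
  rw [flipBit_injective _ this]

end Word

theorem card_piFinset_cons {α : Type*} {n : ℕ} (S S' : Finset α) :
    #(Fintype.piFinset (Fin.cons (α := fun _ : Fin (n + 1) => Finset α) S fun _ => S')) =
      #S * #S' ^ n := by
  simp [Fin.prod_univ_succ]

theorem card_mul_le_of_flipBit_wt {m L w w' d : ℕ} (b : Bool)
    (C : Finset (Fin m → Fin L → Bool))
    (hC : ∀ c ∈ C, ∀ i, wt (c i) = w)
    (hmin : ∀ x ∈ C, ∀ y ∈ C, x ≠ y → 3 ≤ hdist x y)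
    (hd : ∀ a : Fin L → Bool, wt a = w → #{j | a j = b} = d)
    (hw' : ∀ a : Fin L → Bool, wt a = w → ∀ j, a j = b → wt (flipBit a j) = w')
    (hdw' : d ≤ L.choose w') :
    #C * d ≤ L.choose w' * L.choose w ^ (m - 1) := by
  cases m with
  | zero =>
    have hC1 : #C ≤ 1 := (card_le_univ C).trans (by simp)
    simpa using Nat.mul_le_mul hC1 hdw'
  | succ n =>
    let T := Fintype.piFinset (Fin.cons (α := fun _ : Fin (n + 1) => Finset (Fin L → Bool))
      {a | wt a = w'} fun _ => {a | wt a = w})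
    have hT : ∀ c ∈ C, ∀ j, c 0 j = b → Function.update c 0 (flipBit (c 0) j) ∈ T := by
      intro c hc j hj
      refine Fintype.mem_piFinset.mpr fun i => Fin.cases ?_ (fun k => ?_) i
      · simpa using hw' _ (hC c hc 0) j hj
      · simpa [Function.update_of_ne (Fin.succ_ne_zero k)] using hC c hc k.succ
    calc #C * d ≤ #T :=
          card_mul_le_card_of_flipBit C T 0 b d hmin (fun c hc => hd _ (hC c hc 0)) hT
      _ = L.choose w' * L.choose w ^ n := by
          rw [card_piFinset_cons, card_filter_wt_eq, card_filter_wt_eq]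
      _ = L.choose w' * L.choose w ^ (n + 1 - 1) := rfl

/-- Corollary 8(i): generalized sphere-packing bound for single-error
correcting constant subblock-composition codes. -/
theorem stmt_10 (m L w : ℕ) (hw1 : 1 ≤ w) (hw2 : w ≤ L - 1)
    (C : Finset (Fin m → Fin L → Bool))
    (hC : ∀ c ∈ C, ∀ i, wt (c i) = w)
    (hmin : ∀ x ∈ C, ∀ y ∈ C, x ≠ y → 4 ≤ hdist x y) :
    (2 * w ≤ L →
      (C.card : ℚ) ≤ (Nat.choose L (w - 1) * Nat.choose L w ^ (m - 1) : ℚ) / (w : ℚ)) ∧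
    (L < 2 * w →
      (C.card : ℚ) ≤ (Nat.choose L (w + 1) * Nat.choose L w ^ (m - 1) : ℚ) / ((L - w : ℕ) : ℚ)) := by
  have hmin3 : ∀ x ∈ C, ∀ y ∈ C, x ≠ y → 3 ≤ hdist x y := fun x hx y hy hxy =>
    le_trans (by norm_num) (hmin x hx y hy hxy)
  constructor
  · intro _
    have hdw' : w ≤ L.choose (w - 1) := by
      convert Nat.succ_le_choose_of_lt (show w - 1 < L by omega) using 1; omega
    rw [le_div_iff₀ (by exact_mod_cast hw1)]
    exact_mod_cast card_mul_le_of_flipBit_wt true C hC hmin3 (fun _ ha => ha)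
      (fun _ ha _ hj => by rw [wt_flipBit_of_true hj, ha]) hdw'
  · intro _
    have hdw' : L - w ≤ L.choose (w + 1) := by
      rw [← Nat.choose_symm (show w + 1 ≤ L by omega)]
      convert Nat.succ_le_choose_of_lt (show L - (w + 1) < L by omega) using 1; omega
    rw [le_div_iff₀ (by norm_num; omega)]
    exact_mod_cast card_mul_le_of_flipBit_wt false C hC hmin3
      (fun _ ha => by rw [card_filter_eq_false, ha])
      (fun _ ha _ hj => by rw [wt_flipBit_of_false hj, ha]) hdw'
end

section
/- Fix x ∈ C(m,L,w) with L ≥ w+2 and integers t ≥ m and t̃ = ⌊(t−m)/2⌋ ≥ 0. The number of words y ∈ C(m,L,w+1) such that exactly t̃ subblocks of y differ from the corresponding subblocks of x in exactly three positions and the remaining m−t̃ subblocks differ in exactly one position equals C(m,t̃)·[C(L−w,2)·w]^{t̃}·(L−w)^{m−t̃}, and every such y satisfies Hamming distance τ(x,y) = 3t̃ + (m−t̃) ≤ t. -/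
/-!
A subblock `c` of weight `w + 1` at distance `2k + 1` from a subblock `b` of weight `w` arises from
`b` by switching off `k` of its `w` ones and switching on `k + 1` of its `L - w` zeros, so there are
`C(w, k) · C(L - w, k + 1)` of them: `C(L - w, 2) · w` at distance 3 and `L - w` at distance 1.
A word `y` is determined by the set of `t̃` subblocks at distance 3 together with an independent
choice in each subblock, which gives the product formula, and its distance from `x` is
`3t̃ + (m - t̃) = m + 2t̃ ≤ t`.
-/

open Finset

theorem Finset.card_add_card_sdiff_comm {α : Type*} [DecidableEq α] (s t : Finset α) :
    #t + #(s \ t) = #s + #(t \ s) := by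
  rw [add_comm, card_sdiff_add_card, union_comm, ← card_sdiff_add_card, add_comm]

theorem Finset.card_filter_card_sdiff_eq_card_sdiff_eq {α : Type*} [Fintype α] [DecidableEq α]
    (s : Finset α) (p q : ℕ) :
    #{t : Finset α | #(s \ t) = p ∧ #(t \ s) = q} = (#s).choose p * (#sᶜ).choose q := by
  rw [← card_powersetCard, ← card_powersetCard, ← card_product]
  have recover : ∀ PQ ∈ s.powersetCard p ×ˢ sᶜ.powersetCard q,
      (s \ (s \ PQ.1 ∪ PQ.2), (s \ PQ.1 ∪ PQ.2) \ s) = PQ := by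
    rintro ⟨P, Q⟩ hPQ
    simp only [mem_product, mem_powersetCard, subset_iff, mem_compl] at hPQ
    simp only [Prod.mk.injEq]
    constructor <;> ext j <;> grind
  refine card_bij' (fun t _ => (s \ t, t \ s)) (fun PQ _ => s \ PQ.1 ∪ PQ.2) ?_ ?_ ?_ recover
  · intro t ht
    simp only [mem_filter, mem_univ, true_and] at ht
    simp only [mem_product, mem_powersetCard, ht, and_true]
    exact ⟨sdiff_subset, fun j hj => mem_compl.2 (mem_sdiff.1 hj).2⟩
  · intro PQ hPQ
    have h := recover PQ hPQ
    simp only [mem_product, mem_powersetCard] at hPQ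
    simp only [Prod.ext_iff] at h
    simp only [mem_filter, mem_univ, h.1, h.2, hPQ.1.2, hPQ.2.2, and_self]
  · intro t _
    ext j
    simp only [mem_union, mem_sdiff]
    tauto

theorem Finset.sum_eq_card_nsmul_add_card_nsmul {ι M : Type*} [AddCommMonoid M] {s : Finset ι}
    {f : ι → M} {a b : M} [DecidableEq M] (h : ∀ i ∈ s, f i = a ∨ f i = b) :
    ∑ i ∈ s, f i = #{i ∈ s | f i = a} • a + #{i ∈ s | f i ≠ a} • b := by
  rw [← sum_filter_add_sum_filter_not s (f · = a)]
  congr 1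
  · rw [sum_congr rfl fun i hi => (mem_filter.1 hi).2, sum_const]
  · refine (sum_congr rfl fun i hi => ?_).trans (sum_const b)
    obtain ⟨hi, hia⟩ := mem_filter.1 hi
    exact (h i hi).resolve_left hia

section PiFinset

variable {ι β : Type*} [Fintype ι] [DecidableEq ι] (A B : ι → Finset β)

theorem filter_piFinset_union_eq_piFinset_ite [DecidableEq β] (hAB : ∀ i, Disjoint (A i) (B i))
    (S : Finset ι) :
    {y ∈ Fintype.piFinset (fun i => A i ∪ B i) | ({i | y i ∈ A i} : Finset ι) = S} =
      Fintype.piFinset (fun i => if i ∈ S then A i else B i) := by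
  ext y
  rw [mem_filter, Fintype.mem_piFinset, Fintype.mem_piFinset]
  constructor
  · rintro ⟨hy, rfl⟩ i
    by_cases hi : y i ∈ A i
    · simp [hi]
    · simpa [hi] using hy i
  · intro hy
    refine ⟨fun i => ?_, ?_⟩
    · have := hy i
      split_ifs at this <;> simp [this]
    · ext i
      by_cases hi : i ∈ S
      · simpa [hi] using hy i
      · have := hy i
        rw [if_neg hi] at this
        simpa [hi] using disjoint_right.1 (hAB i) this

theorem card_piFinset_ite {a b : ℕ} (hA : ∀ i, #(A i) = a) (hB : ∀ i, #(B i) = b)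
    (S : Finset ι) :
    #(Fintype.piFinset fun i => if i ∈ S then A i else B i) =
      a ^ #S * b ^ (Fintype.card ι - #S) := by
  simp only [Fintype.card_piFinset, apply_ite card, hA, hB]
  rw [prod_ite, prod_const, prod_const, filter_mem_eq_inter, univ_inter, filter_notMem_eq_sdiff,
    card_univ_sdiff]

theorem card_filter_piFinset_union_card_eq [DecidableEq β] (hAB : ∀ i, Disjoint (A i) (B i))
    {a b : ℕ} (hA : ∀ i, #(A i) = a) (hB : ∀ i, #(B i) = b) (k : ℕ) :
    #{y ∈ Fintype.piFinset (fun i => A i ∪ B i) | #{i | y i ∈ A i} = k} =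
      (Fintype.card ι).choose k * a ^ k * b ^ (Fintype.card ι - k) := by
  rw [card_eq_sum_card_fiberwise (f := fun y => ({i | y i ∈ A i} : Finset ι))
    (t := powersetCard k univ) (fun y hy => by simpa using (mem_filter.1 hy).2)]
  have hfiber : ∀ S ∈ powersetCard k univ,
      #{y ∈ {y ∈ Fintype.piFinset (fun i => A i ∪ B i) | #{i | y i ∈ A i} = k} |
        ({i | y i ∈ A i} : Finset ι) = S} = a ^ k * b ^ (Fintype.card ι - k) := by
    intro S hS
    rw [mem_powersetCard_univ] at hS
    rw [filter_filter, ← hS, ← card_piFinset_ite A B hA hB S,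
      ← filter_piFinset_union_eq_piFinset_ite A B hAB S]
    congr 1
    refine filter_congr fun y _ => ⟨And.right, fun h => ⟨by rw [h], h⟩⟩
  rw [sum_congr rfl hfiber, sum_const, card_powersetCard, card_univ, smul_eq_mul, mul_assoc]

end PiFinset

section Words

variable {α : Type*} [Fintype α] [DecidableEq α]

def ones (b : α → Bool) : Finset α := {j | b j = true}

def onesEquiv : (α → Bool) ≃ Finset α where
  toFun := ones
  invFun s j := decide (j ∈ s)
  left_inv b := by ext j; simp [ones]
  right_inv s := by ext j; simp [ones]

theorem hammingDist_eq_card_sdiff_add_card_sdiff (b c : α → Bool) :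
    hammingDist b c = #(ones b \ ones c) + #(ones c \ ones b) := by
  rw [← card_union_of_disjoint disjoint_sdiff_sdiff, hammingDist]
  congr 1
  ext j
  simp only [mem_filter, mem_univ, true_and, mem_union, mem_sdiff, ones]
  cases b j <;> cases c j <;> decide

end Words

theorem wt_eq_card_ones {L : ℕ} (b : Fin L → Bool) : wt b = #(ones b) := rfl

def wtSphere {L : ℕ} (b : Fin L → Bool) (v d : ℕ) : Finset (Fin L → Bool) :=
  {c | wt c = v ∧ hammingDist b c = d}

theorem card_wtSphere_succ {L w : ℕ} {b : Fin L → Bool} (hb : wt b = w) (k : ℕ) :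
    #(wtSphere b (w + 1) (2 * k + 1)) = w.choose k * (L - w).choose (k + 1) := by
  rw [wt_eq_card_ones] at hb
  have h : ∀ c : Fin L → Bool, (wt c = w + 1 ∧ hammingDist b c = 2 * k + 1) ↔
      (#(ones b \ ones c) = k ∧ #(ones c \ ones b) = k + 1) := by
    intro c
    have := card_add_card_sdiff_comm (ones b) (ones c)
    rw [hammingDist_eq_card_sdiff_add_card_sdiff, wt_eq_card_ones]
    omega
  rw [wtSphere, card_equiv onesEquiv (t := {t | #(ones b \ t) = k ∧ #(t \ ones b) = k + 1})
    (fun c => by simp only [mem_filter, mem_univ, true_and]; exact h c),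
    card_filter_card_sdiff_eq_card_sdiff_eq, card_compl, Fintype.card_fin, hb]

theorem disjoint_wtSphere {L : ℕ} (b : Fin L → Bool) (v : ℕ) {d e : ℕ} (hde : d ≠ e) :
    Disjoint (wtSphere b v d) (wtSphere b v e) :=
  disjoint_filter.2 fun _ _ hd he => hde (hd.2.symm.trans he.2)

theorem filter_wt_hammingDist_eq_filter_piFinset {m L : ℕ} (x : Fin m → Fin L → Bool)
    (v d e k : ℕ) :
    ({y | (∀ i, wt (y i) = v) ∧ #{i | hammingDist (x i) (y i) = d} = k ∧
        ∀ i, hammingDist (x i) (y i) = d ∨ hammingDist (x i) (y i) = e} :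
        Finset (Fin m → Fin L → Bool)) =
      {y ∈ Fintype.piFinset (fun i => wtSphere (x i) v d ∪ wtSphere (x i) v e) |
        #{i | y i ∈ wtSphere (x i) v d} = k} := by
  ext y
  simp only [mem_filter, mem_univ, true_and, Fintype.mem_piFinset, mem_union, wtSphere]
  constructor
  · rintro ⟨hw, hk, hd⟩
    exact ⟨fun i => by simp [hw i, hd i], by simpa [hw] using hk⟩
  · rintro ⟨hy, hk⟩
    have hw : ∀ i, wt (y i) = v := fun i => by rcases hy i with h | h <;> exact h.1
    exact ⟨hw, by simpa [hw] using hk, fun i => by simpa [hw] using hy i⟩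

theorem hdist_eq_of_forall_hammingDist_eq_or_eq {m L : ℕ} {x y : Fin m → Fin L → Bool}
    {d e : ℕ} (h : ∀ i, hammingDist (x i) (y i) = d ∨ hammingDist (x i) (y i) = e) :
    hdist x y = #{i | hammingDist (x i) (y i) = d} * d +
      (m - #{i | hammingDist (x i) (y i) = d}) * e := by
  have hsplit := card_filter_add_card_filter_not (s := univ) (fun i => hammingDist (x i) (y i) = d)
  rw [card_univ, Fintype.card_fin] at hsplit
  rw [hdist, sum_eq_card_nsmul_add_card_nsmul fun i _ => h i, smul_eq_mul, smul_eq_mul]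
  congr 2
  simp only [ne_eq]
  omega

theorem stmt_12_general (m L w t : ℕ) (ht : m ≤ t)
    (x : Fin m → Fin L → Bool) (hx : ∀ i, wt (x i) = w) :
    (Finset.univ.filter (fun y : Fin m → Fin L → Bool =>
      (∀ i, wt (y i) = w + 1) ∧
      (Finset.univ.filter (fun i : Fin m => hammingDist (x i) (y i) = 3)).card = (t - m) / 2 ∧
      ∀ i, hammingDist (x i) (y i) = 3 ∨ hammingDist (x i) (y i) = 1)).card =
      Nat.choose m ((t - m) / 2) * (Nat.choose (L - w) 2 * w) ^ ((t - m) / 2) *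
        (L - w) ^ (m - (t - m) / 2) ∧
    ∀ y : Fin m → Fin L → Bool,
      ((∀ i, wt (y i) = w + 1) ∧
        (Finset.univ.filter (fun i : Fin m => hammingDist (x i) (y i) = 3)).card = (t - m) / 2 ∧
        ∀ i, hammingDist (x i) (y i) = 3 ∨ hammingDist (x i) (y i) = 1) →
      hdist x y = 3 * ((t - m) / 2) + (m - (t - m) / 2) ∧
        3 * ((t - m) / 2) + (m - (t - m) / 2) ≤ t := by
  set k := (t - m) / 2
  have hA : ∀ i, #(wtSphere (x i) (w + 1) 3) = (L - w).choose 2 * w := fun i => by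
    simpa [mul_comm] using card_wtSphere_succ (hx i) 1
  have hB : ∀ i, #(wtSphere (x i) (w + 1) 1) = L - w := fun i => by
    simpa using card_wtSphere_succ (hx i) 0
  refine ⟨?_, ?_⟩
  · rw [filter_wt_hammingDist_eq_filter_piFinset x (w + 1) 3 1 k,
      card_filter_piFinset_union_card_eq _ _
        (fun i => disjoint_wtSphere (x i) (w + 1) (by decide)) hA hB, Fintype.card_fin]
  · rintro y ⟨-, hk, hd⟩
    have hkm : k ≤ m := hk ▸ (card_filter_le _ _).trans_eq (card_fin m)
    rw [hdist_eq_of_forall_hammingDist_eq_or_eq hd, hk]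
    omega

/-- The counting step in Proposition 9: for `x ∈ C(m,L,w)` with `L ≥ w+2`,
`t ≥ m` and `t̃ = ⌊(t-m)/2⌋`, the number of `y ∈ C(m,L,w+1)` with exactly `t̃`
subblocks differing from `x` in exactly three positions and the remaining
`m - t̃` differing in exactly one position is
`C(m,t̃)·[C(L-w,2)·w]^t̃·(L-w)^{m-t̃}`, and each such `y` is at Hamming
distance `3t̃ + (m - t̃) ≤ t` from `x`. -/
theorem stmt_12 (m L w t : ℕ) (hL : w + 2 ≤ L) (ht : m ≤ t)
    (x : Fin m → Fin L → Bool) (hx : ∀ i, wt (x i) = w) :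
    (Finset.univ.filter (fun y : Fin m → Fin L → Bool =>
      (∀ i, wt (y i) = w + 1) ∧
      (Finset.univ.filter (fun i : Fin m => hammingDist (x i) (y i) = 3)).card = (t - m) / 2 ∧
      ∀ i, hammingDist (x i) (y i) = 3 ∨ hammingDist (x i) (y i) = 1)).card =
      Nat.choose m ((t - m) / 2) * (Nat.choose (L - w) 2 * w) ^ ((t - m) / 2) *
        (L - w) ^ (m - (t - m) / 2) ∧
    ∀ y : Fin m → Fin L → Bool,
      ((∀ i, wt (y i) = w + 1) ∧
        (Finset.univ.filter (fun i : Fin m => hammingDist (x i) (y i) = 3)).card = (t - m) / 2 ∧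
        ∀ i, hammingDist (x i) (y i) = 3 ∨ hammingDist (x i) (y i) = 1) →
      hdist x y = 3 * ((t - m) / 2) + (m - (t - m) / 2) ∧
        3 * ((t - m) / 2) + (m - (t - m) / 2) ≤ t :=
  stmt_12_general m L w t ht x hx
end
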